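/- arXiv:0906.3413 — 6 statements merged into one kernel-verified Lean document; each statement's English description precedes it below -/
import Mathlib

section
/- For a prime p > 3 and integers m ≥ 0, r ≥ 1, the central binomial coefficient satisfies C(2mp^r, mp^r) ≡ C(2mp^{r-1}, mp^{r-1}) (mod p^{3r}). -/
/-!
Write `N = m p^r = n p` and let `W M = Nat.coprimeFactorial p M`, the product of the integers
in `(0, M]` prime to `p`. Splitting the multiples of `p` off the factorials gives
`C(2N, N) · W(N)² = C(2n, n) · W(2N)`, so it suffices that `W(2N) ≡ W(N)²` modulo `p^{3r}`,
`W(N)` being a unit. With `S` the integers in `(0, N]` prime to `p`, pairing `N - k` with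
`N + k` gives `W(2N) = ∏_S (N² - k²) = (-1)^{#S} W(N)² ∏_S (1 - N² k⁻²)`, and since `N⁴ ≡ 0`
the last product is `1 - N² Σ_S k⁻²`. As `k` runs `m` times over the units of `ZMod (p^r)`,
the count `#S = m φ(p^r)` is even and `Σ_S k⁻² ≡ m Σ_u u²` modulo `p^r`; the substitution
`u ↦ 2u` shows `Σ_u u² = 4 Σ_u u²`, so this sum vanishes because `3` is a unit.
-/

open Finset
open scoped Nat

theorem prod_one_add_mul_of_sq_eq_zero {ι R : Type*} [CommRing R] (s : Finset ι) {c : R}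
    (hc : c ^ 2 = 0) (x : ι → R) :
    ∏ i ∈ s, (1 + c * x i) = 1 + c * ∑ i ∈ s, x i := by
  classical
  induction s using Finset.induction_on with
  | empty => simp
  | insert i s hi ih =>
    rw [prod_insert hi, sum_insert hi, ih]
    linear_combination x i * (∑ j ∈ s, x j) * hc

theorem sum_units_pow_eq_zero {R : Type*} [CommRing R] [Fintype Rˣ] (a : Rˣ) {k : ℕ}
    (ha : IsUnit ((a : R) ^ k - 1)) : ∑ u : Rˣ, (u : R) ^ k = 0 := by
  have hmul := Equiv.sum_comp (Equiv.mulLeft a) fun u : Rˣ => (u : R) ^ k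
  simp only [Equiv.coe_mulLeft, Units.val_mul, mul_pow, ← mul_sum] at hmul
  exact ha.mul_right_eq_zero.mp (by linear_combination hmul)

namespace ZMod

theorem sum_units_inv_sq_eq_zero {n : ℕ} [NeZero n] (h2 : IsUnit (2 : ZMod n))
    (h3 : IsUnit (3 : ZMod n)) : ∑ u : (ZMod n)ˣ, ((u : ZMod n)⁻¹) ^ 2 = 0 := by
  have hinv := Equiv.sum_comp (Equiv.inv (ZMod n)ˣ) fun u => (u : ZMod n) ^ 2
  simp only [Equiv.inv_apply] at hinv
  simp only [inv_coe_unit, hinv]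
  refine sum_units_pow_eq_zero h2.unit ?_
  norm_num [h3]

theorem isUnit_natCast_of_not_dvd {p k : ℕ} (hp : p.Prime) (e : ℕ) (hk : ¬ p ∣ k) :
    IsUnit (k : ZMod (p ^ e)) :=
  (isUnit_iff_coprime k _).mpr ((hp.coprime_iff_not_dvd.mpr hk).symm.pow_right e)

theorem castHom_natCast_inv {d n k : ℕ} (hd : d ∣ n) (hk : IsUnit (k : ZMod n)) :
    castHom hd (ZMod d) ((k : ZMod n)⁻¹) = (k : ZMod d)⁻¹ := by
  refine (ZMod.inv_eq_of_mul_eq_one _ _ _ ?_).symm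
  rw [← map_natCast (castHom hd (ZMod d)) k, ← map_mul, mul_inv_of_unit _ hk, map_one]

theorem natCast_mul_eq_zero_of_castHom_eq_zero {a d n : ℕ} [NeZero n] (hd : d ∣ n)
    (hn : n ∣ a * d) {x : ZMod n} (hx : castHom hd (ZMod d) x = 0) : (a : ZMod n) * x = 0 := by
  rw [← natCast_zmod_val x] at hx ⊢
  rw [map_natCast, natCast_eq_zero_iff] at hx
  obtain ⟨t, ht⟩ := hx
  rw [ht, ← Nat.cast_mul, natCast_eq_zero_iff, ← mul_assoc]
  exact hn.mul_right t

section Periodic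

variable {M : Type*} [AddCommMonoid M] {n : ℕ} [NeZero n]

theorem sum_range_mul_natCast (g : ZMod n → M) (m : ℕ) :
    ∑ k ∈ range (m * n), g k = m • ∑ x, g x := by
  induction m with
  | zero => simp
  | succ m ih =>
    have hblock : ∑ k ∈ range n, g ((m * n + k : ℕ) : ZMod n) = ∑ x, g x := by
      simp only [Nat.cast_add, Nat.cast_mul, natCast_self, mul_zero, zero_add]
      exact sum_nbij' (fun k => (k : ZMod n)) val (by simp) (by simp [val_lt])
        (fun k hk => val_cast_of_lt (mem_range.mp hk)) (fun x _ => natCast_zmod_val x)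
        (fun _ _ => rfl)
    rw [add_mul, one_mul, sum_range_add, ih, hblock, succ_nsmul]

theorem sum_Ioc_mul_natCast (g : ZMod n → M) (m : ℕ) :
    ∑ k ∈ Ioc 0 (m * n), g k = m • ∑ x, g x := by
  rw [← Ico_add_one_add_one_eq_Ioc, ← sum_Ico_add', ← range_eq_Ico]
  simp only [Nat.cast_add, Nat.cast_one]
  rw [sum_range_mul_natCast (fun x => g (x + 1)), ← Equiv.sum_comp (Equiv.addRight 1) g]
  rfl

theorem sum_Ioc_filter_coprime (f : ZMod n → M) (m : ℕ) :
    ∑ k ∈ Ioc 0 (m * n) with k.Coprime n, f k = m • ∑ u : (ZMod n)ˣ, f u := by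
  classical
  have hunits : ∑ x : ZMod n, (if IsUnit x then f x else 0) = ∑ u : (ZMod n)ˣ, f u := by
    rw [← sum_filter]
    exact sum_bij' (fun x hx => (mem_filter.mp hx).2.unit) (fun u _ => u) (by simp) (by simp)
      (by simp) (by simp) (by simp)
  simp_rw [sum_filter, ← isUnit_iff_coprime]
  rw [sum_Ioc_mul_natCast (fun x => if IsUnit x then f x else 0), hunits]

end Periodic

end ZMod

namespace Nat

theorem prod_Ioc_zero_id_eq_factorial (n : ℕ) : ∏ k ∈ Ioc 0 n, k = n ! := by
  rw [← Ico_add_one_add_one_eq_Ioc, zero_add, prod_Ico_id_eq_factorial]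

theorem factorial_two_mul (n : ℕ) : (2 * n)! = centralBinom n * n ! ^ 2 := by
  rw [centralBinom_eq_two_mul_choose, sq, ← mul_assoc,
    ← choose_mul_factorial_mul_factorial (by omega : n ≤ 2 * n), two_mul, Nat.add_sub_cancel]

theorem Ioc_filter_dvd_eq_map {p : ℕ} (hp : 0 < p) (t : ℕ) :
    {k ∈ Ioc 0 (t * p) | p ∣ k} = (Ioc 0 t).map ⟨(· * p), mul_left_injective₀ hp.ne'⟩ := by
  ext k
  simp only [mem_filter, mem_Ioc, mem_map, Function.Embedding.coeFn_mk]
  constructor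
  · rintro ⟨⟨hk0, hkt⟩, j, rfl⟩
    exact ⟨j, ⟨Nat.pos_of_mul_pos_left hk0, by nlinarith⟩, mul_comm j p⟩
  · rintro ⟨j, ⟨hj0, hjt⟩, rfl⟩
    exact ⟨⟨Nat.mul_pos hj0 hp, Nat.mul_le_mul_right p hjt⟩, dvd_mul_left p j⟩

section Reindex

variable {M : Type*} [CommMonoid M] {p N : ℕ}

theorem prod_Ioc_filter_not_dvd_sub (hN : p ∣ N) (f : ℕ → M) :
    ∏ k ∈ Ioc 0 N with ¬ p ∣ k, f (N - k) = ∏ k ∈ Ioc 0 N with ¬ p ∣ k, f k := by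
  have hsub : ∀ k ≤ N, p ∣ N - k → p ∣ k := fun k hk h => by
    simpa [Nat.sub_sub_self hk] using Nat.dvd_sub hN h
  have hmaps : ∀ k ∈ {k ∈ Ioc 0 N | ¬ p ∣ k}, N - k ∈ {k ∈ Ioc 0 N | ¬ p ∣ k} := by
    simp only [mem_filter, mem_Ioc]
    rintro k ⟨⟨hk0, hkN⟩, hk⟩
    have hkN' : k ≠ N := by rintro rfl; exact hk hN
    exact ⟨⟨by omega, by omega⟩, fun h => hk (hsub k hkN h)⟩
  refine prod_nbij' (N - ·) (N - ·) hmaps hmaps (fun k hk => ?_) (fun k hk => ?_) (fun k hk => ?_)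
    <;> simp only [mem_filter, mem_Ioc] at hk <;> simp [Nat.sub_sub_self hk.1.2]

theorem prod_Ioc_filter_not_dvd_add (hN : p ∣ N) (f : ℕ → M) :
    ∏ k ∈ Ioc N (2 * N) with ¬ p ∣ k, f k = ∏ k ∈ Ioc 0 N with ¬ p ∣ k, f (N + k) := by
  have hIoc : Ioc N (2 * N) = (Ioc 0 N).map (addLeftEmbedding N) := by simp [two_mul]
  rw [hIoc, filter_map, prod_map]
  simp only [addLeftEmbedding, Function.Embedding.coeFn_mk, Function.comp_def,
    Nat.dvd_add_right hN]

end Reindex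

def coprimeFactorial (p M : ℕ) : ℕ := ∏ k ∈ Ioc 0 M with ¬ p ∣ k, k

theorem factorial_mul_eq_mul_coprimeFactorial {p : ℕ} (hp : 0 < p) (t : ℕ) :
    (t * p)! = p ^ t * t ! * coprimeFactorial p (t * p) := by
  rw [coprimeFactorial, ← prod_Ioc_zero_id_eq_factorial,
    ← prod_filter_mul_prod_filter_not _ (p ∣ ·), Ioc_filter_dvd_eq_map hp, prod_map]
  simp only [Function.Embedding.coeFn_mk, prod_mul_distrib, prod_const, card_Ioc,
    prod_Ioc_zero_id_eq_factorial, Nat.sub_zero, mul_comm (p ^ t)]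

theorem centralBinom_mul_coprimeFactorial_sq {p : ℕ} (hp : 0 < p) (n : ℕ) :
    centralBinom (n * p) * coprimeFactorial p (n * p) ^ 2
      = centralBinom n * coprimeFactorial p (2 * (n * p)) := by
  have h := factorial_two_mul (n * p)
  rw [← mul_assoc, factorial_mul_eq_mul_coprimeFactorial hp,
    factorial_mul_eq_mul_coprimeFactorial hp, factorial_two_mul, pow_mul', mul_assoc 2] at h
  refine Nat.eq_of_mul_eq_mul_left (by positivity : 0 < (p ^ n * n !) ^ 2) ?_
  linarith

theorem coprimeFactorial_two_mul {p N : ℕ} (hN : p ∣ N) :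
    coprimeFactorial p (2 * N) = ∏ k ∈ Ioc 0 N with ¬ p ∣ k, (N - k) * (N + k) := by
  rw [coprimeFactorial, prod_mul_distrib, prod_Ioc_filter_not_dvd_sub hN (fun k => k),
    ← prod_Ioc_filter_not_dvd_add hN (fun k => k), prod_filter, prod_filter, prod_filter,
    prod_Ioc_consecutive _ (Nat.zero_le N) (by omega)]

theorem isUnit_coprimeFactorial {p : ℕ} (hp : p.Prime) (e M : ℕ) :
    IsUnit (coprimeFactorial p M : ZMod (p ^ e)) := by
  rw [coprimeFactorial, Nat.cast_prod]
  exact IsUnit.prod_iff.mpr fun k hk => ZMod.isUnit_natCast_of_not_dvd hp e (mem_filter.mp hk).2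

end Nat

section PrimePower

variable {p r : ℕ}

theorem filter_not_dvd_eq_filter_coprime_pow (hp : p.Prime) (hr : r ≠ 0) (s : Finset ℕ) :
    {k ∈ s | ¬ p ∣ k} = {k ∈ s | k.Coprime (p ^ r)} :=
  filter_congr fun k _ => by
    rw [Nat.coprime_pow_right_iff (Nat.pos_of_ne_zero hr), Nat.coprime_comm,
      hp.coprime_iff_not_dvd]

theorem card_Ioc_filter_not_dvd (hp : p.Prime) (hr : r ≠ 0) (m : ℕ) :
    #{k ∈ Ioc 0 (m * p ^ r) | ¬ p ∣ k} = m * φ (p ^ r) := by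
  have : NeZero (p ^ r) := ⟨pow_ne_zero r hp.ne_zero⟩
  rw [card_eq_sum_ones, filter_not_dvd_eq_filter_coprime_pow hp hr,
    ZMod.sum_Ioc_filter_coprime (fun _ => 1), sum_const, card_univ,
    ZMod.card_units_eq_totient, smul_eq_mul, smul_eq_mul, mul_one]

theorem sum_Ioc_filter_not_dvd_inv_sq (hp : p.Prime) (hp3 : 3 < p) (hr : r ≠ 0) (m : ℕ) :
    ∑ k ∈ Ioc 0 (m * p ^ r) with ¬ p ∣ k, ((k : ZMod (p ^ r))⁻¹) ^ 2 = 0 := by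
  have : NeZero (p ^ r) := ⟨pow_ne_zero r hp.ne_zero⟩
  have hsmall : ∀ q, 0 < q → q < p → IsUnit (q : ZMod (p ^ r)) := fun q hq hqp =>
    ZMod.isUnit_natCast_of_not_dvd hp r (Nat.not_dvd_of_pos_of_lt hq hqp)
  rw [filter_not_dvd_eq_filter_coprime_pow hp hr,
    ZMod.sum_Ioc_filter_coprime (fun x => (x⁻¹) ^ 2),
    ZMod.sum_units_inv_sq_eq_zero (by exact_mod_cast hsmall 2 (by norm_num) (by omega))
      (by exact_mod_cast hsmall 3 (by norm_num) hp3), smul_zero]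

theorem coprimeFactorial_two_mul_cast_eq_sq (hp : p.Prime) (hp3 : 3 < p) (hr : r ≠ 0) (m : ℕ) :
    (Nat.coprimeFactorial p (2 * (m * p ^ r)) : ZMod (p ^ (3 * r)))
      = (Nat.coprimeFactorial p (m * p ^ r) : ZMod (p ^ (3 * r))) ^ 2 := by
  have : NeZero (p ^ (3 * r)) := ⟨pow_ne_zero _ hp.ne_zero⟩
  set N := m * p ^ r with hN
  set S := {k ∈ Ioc 0 N | ¬ p ∣ k} with hS
  have hpN : p ∣ N := (dvd_pow_self p hr).mul_left m
  have hN4 : (-(N : ZMod (p ^ (3 * r))) ^ 2) ^ 2 = 0 := by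
    rw [neg_sq, ← pow_mul, ← Nat.cast_pow, ZMod.natCast_eq_zero_iff]
    exact ⟨m ^ 4 * p ^ r, by rw [hN]; ring⟩
  have hsum : (N : ZMod (p ^ (3 * r))) ^ 2 * ∑ k ∈ S, ((k : ZMod (p ^ (3 * r)))⁻¹) ^ 2 = 0 := by
    rw [← Nat.cast_pow]
    refine ZMod.natCast_mul_eq_zero_of_castHom_eq_zero (pow_dvd_pow p (by omega : r ≤ 3 * r))
      ⟨m ^ 2, by rw [hN]; ring⟩ ?_
    rw [map_sum, ← sum_Ioc_filter_not_dvd_inv_sq hp hp3 hr m]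
    refine sum_congr rfl fun k hk => ?_
    rw [map_pow, ZMod.castHom_natCast_inv _
      (ZMod.isUnit_natCast_of_not_dvd hp _ (mem_filter.mp hk).2)]
  have hterm : ∀ k ∈ S, (((N - k) * (N + k) : ℕ) : ZMod (p ^ (3 * r))) =
      -((k : ZMod (p ^ (3 * r))) ^ 2 *
        (1 + -(N : ZMod (p ^ (3 * r))) ^ 2 * ((k : ZMod (p ^ (3 * r)))⁻¹) ^ 2)) := by
    intro k hk
    rw [hS, mem_filter, mem_Ioc] at hk
    have hinv := ZMod.mul_inv_of_unit _ (ZMod.isUnit_natCast_of_not_dvd hp (3 * r) hk.2)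
    push_cast [hk.1.2]
    linear_combination
      (-(N : ZMod (p ^ (3 * r))) ^ 2 * (1 + (k : ZMod (p ^ (3 * r))) * (k : ZMod (p ^ (3 * r)))⁻¹))
        * hinv
  have heven : Even #S := by
    rw [hS, card_Ioc_filter_not_dvd hp hr]
    exact (Nat.totient_even ((by omega : 2 < p).trans_le (Nat.le_self_pow hr p))).mul_left m
  rw [Nat.coprimeFactorial_two_mul hpN, Nat.coprimeFactorial, Nat.cast_prod, Nat.cast_prod,
    prod_congr rfl hterm, prod_neg, heven.neg_one_pow, one_mul, prod_mul_distrib,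
    prod_one_add_mul_of_sq_eq_zero _ hN4, neg_mul, hsum, neg_zero, add_zero, mul_one, prod_pow]

end PrimePower

theorem central_binom_supercongruence (p : ℕ) (hp : p.Prime) (hp3 : 3 < p)
    (m r : ℕ) (hr : 1 ≤ r) :
    Nat.choose (2 * m * p ^ r) (m * p ^ r) ≡
      Nat.choose (2 * m * p ^ (r - 1)) (m * p ^ (r - 1)) [MOD p ^ (3 * r)] := by
  obtain ⟨s, rfl⟩ : ∃ s, r = s + 1 := ⟨r - 1, by omega⟩
  set n := m * p ^ s
  have hN : m * p ^ (s + 1) = n * p := by rw [pow_succ, ← mul_assoc]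
  rw [Nat.add_sub_cancel, mul_assoc 2, mul_assoc 2, ← Nat.centralBinom_eq_two_mul_choose,
    ← Nat.centralBinom_eq_two_mul_choose, ← ZMod.natCast_eq_natCast_iff, hN]
  have key := congrArg (Nat.cast : ℕ → ZMod (p ^ (3 * (s + 1))))
    (Nat.centralBinom_mul_coprimeFactorial_sq hp.pos n)
  push_cast at key
  rw [← hN, coprimeFactorial_two_mul_cast_eq_sq hp hp3 s.succ_ne_zero, hN] at key
  exact ((Nat.isUnit_coprimeFactorial hp _ _).pow 2).mul_right_cancel key
end

section
/- Let p > 3 be prime and m, r positive integers. Then S_1(mp^r) = Σ_{1 ≤ i ≤ mp^r, p ∤ i} 1/i has p-adic valuation at least r. -/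
/-!
When `p ∣ N`, the involution `i ↦ N - i` preserves the integers in `[1, N]` prime to `p`, so pairing
`1/i` with `1/(N - i)` gives `2 S_1(N) = ∑ N / (i (N - i))`. Every denominator is a `p`-adic unit,
so each term has norm `|N|_p`, and since `p` is odd, `|S_1(N)|_p = |2 S_1(N)|_p ≤ |N|_p`.
-/

open Finset

/-- The sum `S_1(N)`. -/
def coprimeHarmonic (p N : ℕ) : ℚ :=
  ∑ i ∈ (Icc 1 N).filter (fun i => ¬ p ∣ i), (1 : ℚ) / (i : ℚ)

section

variable {p N i : ℕ}

lemma lt_of_mem_filter_not_dvd (hN : p ∣ N) (hi : i ∈ (Icc 1 N).filter (fun i => ¬ p ∣ i)) :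
    i < N := by
  simp only [mem_filter, mem_Icc] at hi
  exact lt_of_le_of_ne hi.1.2 (by rintro rfl; exact hi.2 hN)

lemma sub_mem_filter_not_dvd (hN : p ∣ N) (hi : i ∈ (Icc 1 N).filter (fun i => ¬ p ∣ i)) :
    N - i ∈ (Icc 1 N).filter (fun i => ¬ p ∣ i) := by
  have hiN := lt_of_mem_filter_not_dvd hN hi
  simp only [mem_filter, mem_Icc] at hi ⊢
  refine ⟨⟨by omega, by omega⟩, fun hd => hi.2 ?_⟩
  simpa [Nat.sub_sub_self hiN.le] using Nat.dvd_sub hN hd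

theorem two_mul_coprimeHarmonic (hN : p ∣ N) :
    2 * coprimeHarmonic p N = ∑ i ∈ (Icc 1 N).filter (fun i => ¬ p ∣ i),
      (N : ℚ) / ((i : ℚ) * ((N : ℚ) - (i : ℚ))) := by
  set s := (Icc 1 N).filter (fun i => ¬ p ∣ i)
  have reflect : ∑ i ∈ s, (1 : ℚ) / (i : ℚ) = ∑ i ∈ s, (1 : ℚ) / ((N - i : ℕ) : ℚ) :=
    sum_nbij' (N - ·) (N - ·) (fun _ => sub_mem_filter_not_dvd hN)
      (fun _ => sub_mem_filter_not_dvd hN)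
      (fun _ hi => Nat.sub_sub_self (lt_of_mem_filter_not_dvd hN hi).le)
      (fun _ hi => Nat.sub_sub_self (lt_of_mem_filter_not_dvd hN hi).le)
      (fun _ hi => by rw [Nat.sub_sub_self (lt_of_mem_filter_not_dvd hN hi).le])
  rw [coprimeHarmonic, two_mul]
  nth_rewrite 2 [reflect]
  rw [← sum_add_distrib]
  refine sum_congr rfl fun i hi => ?_
  have hiN := lt_of_mem_filter_not_dvd hN hi
  have hi0 : (i : ℚ) ≠ 0 := by
    simp only [s, mem_filter, mem_Icc] at hi
    exact_mod_cast (show i ≠ 0 by omega)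
  have hNi0 : (N : ℚ) - i ≠ 0 := sub_ne_zero.mpr (by exact_mod_cast hiN.ne')
  rw [Nat.cast_sub hiN.le]
  field_simp
  ring

theorem padicNorm_coprimeHarmonic_le [Fact p.Prime] (hp2 : p ≠ 2) (hN : p ∣ N) :
    padicNorm p (coprimeHarmonic p N) ≤ padicNorm p N := by
  have norm_two : padicNorm p 2 = 1 := by
    exact_mod_cast (padicNorm.nat_eq_one_iff 2).mpr
      fun h => hp2 ((Nat.prime_dvd_prime_iff_eq Fact.out Nat.prime_two).mp h)
  have norm_term : ∀ i ∈ (Icc 1 N).filter (fun i => ¬ p ∣ i),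
      padicNorm p ((N : ℚ) / ((i : ℚ) * ((N : ℚ) - (i : ℚ)))) = padicNorm p N := by
    intro i hi
    have hiN := lt_of_mem_filter_not_dvd hN hi
    have hNi := sub_mem_filter_not_dvd hN hi
    rw [mem_filter] at hi hNi
    rw [← Nat.cast_sub hiN.le, padicNorm.div,
      padicNorm.mul, (padicNorm.nat_eq_one_iff _).mpr hi.2, (padicNorm.nat_eq_one_iff _).mpr hNi.2,
      mul_one, div_one]
  calc padicNorm p (coprimeHarmonic p N)
      = padicNorm p (2 * coprimeHarmonic p N) := by rw [padicNorm.mul, norm_two, one_mul]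
    _ ≤ padicNorm p N := by
      rw [two_mul_coprimeHarmonic hN]
      exact padicNorm.sum_le' (fun i hi => (norm_term i hi).le) (padicNorm.nonneg _)

end

theorem S_one_padic_general (p : ℕ) (hp : p.Prime) (hp3 : 3 < p) (m r : ℕ)
    (hr : 1 ≤ r) :
    padicNorm p (∑ i ∈ (Finset.Icc 1 (m * p ^ r)).filter (fun i => ¬ p ∣ i),
        (1 : ℚ) / (i : ℚ)) ≤ (p : ℚ) ^ (-(r : ℤ)) := by
  have : Fact p.Prime := ⟨hp⟩
  have hN : p ∣ m * p ^ r := dvd_mul_of_dvd_right (dvd_pow_self p (by omega)) m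
  have norm_N : padicNorm p ((m * p ^ r : ℤ) : ℚ) ≤ (p : ℚ) ^ (-(r : ℤ)) :=
    padicNorm.dvd_iff_norm_le.mp (by push_cast; exact dvd_mul_left _ _)
  calc padicNorm p (coprimeHarmonic p (m * p ^ r))
      ≤ padicNorm p ((m * p ^ r : ℕ) : ℚ) := padicNorm_coprimeHarmonic_le (by omega) hN
    _ ≤ (p : ℚ) ^ (-(r : ℤ)) := by exact_mod_cast norm_N

theorem S_one_padic (p : ℕ) (hp : p.Prime) (hp3 : 3 < p) (m r : ℕ)
    (hm : 1 ≤ m) (hr : 1 ≤ r) :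
    padicNorm p (∑ i ∈ (Finset.Icc 1 (m * p ^ r)).filter (fun i => ¬ p ∣ i),
        (1 : ℚ) / (i : ℚ)) ≤ (p : ℚ) ^ (-(r : ℤ)) :=
  S_one_padic_general p hp hp3 m r hr
end

section
/- Let p > 3 be prime, A ≥ 3, B ≥ 1 naturals, and m, n, r, s positive integers with s ≤ r and np^s ≤ mp^r. Then binom(mp^r, np^s)^A · binom(2np^s, np^s)^B ≡ binom(mp^{r-1}, np^{s-1})^A · binom(2np^{s-1}, np^{s-1})^B (mod p^{3r}). -/
/-!
The engine is Jacobsthal's congruence `C(a p, b p) ≡ C(a, b) (mod p ^ (3 + α + β + γ))` for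
`p > 3`, where `p ^ α`, `p ^ β`, `p ^ γ` divide `a`, `b`, `a - b`, in the weak form that needs
`β ≤ 1 + α + γ`. With `c = a - b` and `∏'` running over the `k ≤ b p` prime to `p`, one has
`C(a p, b p) · ∏' k = C(a, b) · ∏' (c p + k)`. Pairing `k` with `b p - k`, each pair contributes
`k (b p - k) + d` with `d = a c p ^ 2`; modulo `p ^ (3 + α + β + γ)` one has `d ^ 2 ≡ 0`, so the
second product is `∏' k + d E`, and `p ^ (β + 1)` divides `E` because `∑' k⁻² ≡ 0` modulo
`p ^ (β + 1)`.

Apply this to `C(m p ^ r, n p ^ s)` and to `C(2 n p ^ s, n p ^ s)`. If `p ^ τ` exactly divides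
`n p ^ (s - 1)`, both `C(m p ^ r, n p ^ s)` and `C(m p ^ (r - 1), n p ^ (s - 1))` are divisible by
`p ^ (r - 1 - τ)`; raised to the power `A ≥ 3`, this makes up for the weaker congruence that
Jacobsthal gives for the first binomial coefficient.
-/

open Finset Nat

def nonMultiples (p n : ℕ) : Finset ℕ := (Icc 1 n).filter (¬ p ∣ ·)

@[simp]
theorem mem_nonMultiples {p n k : ℕ} : k ∈ nonMultiples p n ↔ (1 ≤ k ∧ k ≤ n) ∧ ¬ p ∣ k := by
  simp [nonMultiples]

theorem prod_Icc_add_eq_factorial_mul_choose (a n : ℕ) :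
    ∏ k ∈ Icc 1 n, (a + k) = n ! * (a + n).choose n := by
  rw [← ascFactorial_eq_factorial_mul_choose, ascFactorial_eq_prod_range,
    ← Ico_add_one_right_eq_Icc, prod_Ico_eq_prod_range, Nat.add_sub_cancel]
  exact prod_congr rfl fun k _ => by ring

theorem prod_Icc_mul_add_eq {p : ℕ} (hp : 0 < p) (b c : ℕ) :
    ∏ k ∈ Icc 1 (b * p), (c * p + k) =
      p ^ b * (∏ j ∈ Icc 1 b, (c + j)) * ∏ k ∈ nonMultiples p (b * p), (c * p + k) := by
  have hmultiples : (Icc 1 (b * p)).filter (p ∣ ·) = (Icc 1 b).image (· * p) := by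
    ext k
    simp only [mem_filter, mem_Icc, mem_image]
    constructor
    · rintro ⟨⟨h1, h2⟩, j, rfl⟩
      exact ⟨j, ⟨by nlinarith, by nlinarith⟩, mul_comm j p⟩
    · rintro ⟨j, ⟨h1, h2⟩, rfl⟩
      exact ⟨⟨by nlinarith, by nlinarith⟩, j, mul_comm j p⟩
  rw [← prod_filter_mul_prod_filter_not (Icc 1 (b * p)) (p ∣ ·), hmultiples,
    prod_image fun x _ y _ h => Nat.eq_of_mul_eq_mul_right hp h]
  simp only [← add_mul, prod_mul_distrib, prod_const, Nat.card_Icc, Nat.add_sub_cancel]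
  rw [nonMultiples]
  ring

theorem choose_mul_mul_prod_nonMultiples {p : ℕ} (hp : 0 < p) (b c : ℕ) :
    ((b + c) * p).choose (b * p) * ∏ k ∈ nonMultiples p (b * p), k =
      (b + c).choose b * ∏ k ∈ nonMultiples p (b * p), (c * p + k) := by
  have hshift := prod_Icc_mul_add_eq hp b c
  have hfactorial := prod_Icc_mul_add_eq hp b 0
  simp only [zero_mul, zero_add, ← Ico_add_one_right_eq_Icc, prod_Ico_id_eq_factorial] at hfactorial
  rw [prod_Icc_add_eq_factorial_mul_choose, prod_Icc_add_eq_factorial_mul_choose] at hshift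
  have hpos : 0 < p ^ b * b ! := by positivity
  apply Nat.eq_of_mul_eq_mul_left hpos
  calc p ^ b * b ! * (((b + c) * p).choose (b * p) * ∏ k ∈ nonMultiples p (b * p), k)
      = (b * p)! * (c * p + b * p).choose (b * p) := by rw [hfactorial, add_mul, add_comm]; ring
    _ = _ := by rw [hshift, add_comm c b]; ring

section Pairing

variable {p n k : ℕ}

theorem sub_mem_nonMultiples (hn : p ∣ n) (hk : k ∈ nonMultiples p n) :
    n - k ∈ nonMultiples p n := by
  rw [mem_nonMultiples] at hk ⊢
  have hkn : k ≠ n := by rintro rfl; exact hk.2 hn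
  refine ⟨by omega, fun hdvd => hk.2 ?_⟩
  simpa [Nat.sub_sub_self hk.1.2] using Nat.dvd_sub hn hdvd

theorem two_mul_ne_of_mem_nonMultiples (hp : Odd p) (hn : p ∣ n) (hk : k ∈ nonMultiples p n) :
    2 * k ≠ n := by
  rintro rfl
  exact (mem_nonMultiples.1 hk).2 ((Nat.coprime_two_right.2 hp).dvd_of_dvd_mul_left hn)

@[to_additive]
theorem prod_nonMultiples_eq_prod_mul_sub {M : Type*} [CommMonoid M] (hp : Odd p) (hn : p ∣ n)
    (f : ℕ → M) :
    ∏ k ∈ nonMultiples p n, f k = ∏ k ∈ (nonMultiples p n).filter (2 * · < n), f k * f (n - k) := by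
  have hK : ∀ k ∈ nonMultiples p n, k ≤ n := fun k hk => (mem_nonMultiples.1 hk).1.2
  have hupper : ∏ k ∈ (nonMultiples p n).filter (¬ 2 * · < n), f k =
      ∏ k ∈ (nonMultiples p n).filter (2 * · < n), f (n - k) := by
    refine prod_nbij' (n - ·) (n - ·) ?_ ?_ ?_ ?_ ?_ <;> intro k hk <;> rw [mem_filter] at hk <;>
      have hkn := hK k hk.1
    · have := two_mul_ne_of_mem_nonMultiples hp hn hk.1
      exact mem_filter.2 ⟨sub_mem_nonMultiples hn hk.1, by omega⟩
    · exact mem_filter.2 ⟨sub_mem_nonMultiples hn hk.1, by omega⟩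
    · exact Nat.sub_sub_self hkn
    · exact Nat.sub_sub_self hkn
    · rw [Nat.sub_sub_self hkn]
  rw [prod_mul_distrib, ← hupper, prod_filter_mul_prod_filter_not]

end Pairing

theorem prod_add_of_mul_self_eq_zero {ι R : Type*} [CommRing R] [DecidableEq ι] {d : R}
    (hd : d * d = 0) (u : ι → R) (S : Finset ι) :
    ∏ i ∈ S, (u i + d) = ∏ i ∈ S, u i + d * ∑ i ∈ S, ∏ j ∈ S.erase i, u j := by
  induction S using Finset.induction_on with
  | empty => simp
  | insert a S ha ih =>
    have herase : ∀ i ∈ S, ∏ j ∈ (insert a S).erase i, u j = u a * ∏ j ∈ S.erase i, u j :=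
      fun i hi => by
        rw [erase_insert_of_ne (ne_of_mem_of_not_mem hi ha).symm,
          prod_insert fun h => ha (mem_of_mem_erase h)]
    rw [prod_insert ha, ih, prod_insert ha, sum_insert ha, erase_insert ha, sum_congr rfl herase,
      ← mul_sum]
    linear_combination (∑ i ∈ S, ∏ j ∈ S.erase i, u j) * hd

theorem sum_prod_erase_eq_prod_mul_sum {ι R : Type*} [CommSemiring R] [DecidableEq ι]
    {S : Finset ι} {u v : ι → R} (huv : ∀ i ∈ S, u i * v i = 1) :
    ∑ i ∈ S, ∏ j ∈ S.erase i, u j = (∏ i ∈ S, u i) * ∑ i ∈ S, v i := by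
  rw [mul_sum]
  refine sum_congr rfl fun i hi => ?_
  rw [← prod_erase_mul S u hi, mul_assoc, huv i hi, mul_one]

theorem sum_units_sq_eq_zero {R : Type*} [CommRing R] [Fintype Rˣ] (u : Rˣ)
    (hu : IsUnit ((u : R) ^ 2 - 1)) : ∑ x : Rˣ, (x : R) ^ 2 = 0 := by
  have hinv : (u : R) ^ 2 * ∑ x : Rˣ, (x : R) ^ 2 = ∑ x : Rˣ, (x : R) ^ 2 := by
    conv_rhs => rw [← Fintype.sum_equiv (Equiv.mulLeft u) (fun x => ((u * x : Rˣ) : R) ^ 2) _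
      fun _ => rfl]
    simp [mul_sum, mul_pow]
  exact hu.mul_right_eq_zero.1 (by rw [sub_mul, hinv, one_mul, sub_self])

theorem Function.Periodic.sum_range_mul {M : Type*} [AddCommMonoid M] {f : ℕ → M} {N : ℕ}
    (hf : Function.Periodic f N) (T : ℕ) :
    ∑ k ∈ range (T * N), f k = T • ∑ k ∈ range N, f k := by
  induction T with
  | zero => simp
  | succ T ih =>
    rw [add_mul, one_mul, sum_range_add, ih, succ_nsmul]
    congr 1
    exact sum_congr rfl fun k _ => by simpa [add_comm] using hf.nat_mul T k

theorem sum_nonMultiples_mul_of_periodic {M : Type*} [AddCommMonoid M] {p N : ℕ} {f : ℕ → M}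
    (hf : Function.Periodic f N) (hpN : p ∣ N) (T : ℕ) :
    ∑ k ∈ nonMultiples p (T * N), f k = T • ∑ k ∈ nonMultiples p N, f k := by
  have hshift : ∀ n, ∑ k ∈ nonMultiples p n, f k =
      ∑ k ∈ range n, if p ∣ 1 + k then 0 else f (1 + k) := by
    intro n
    rw [nonMultiples, sum_filter, ← Ico_add_one_right_eq_Icc, sum_Ico_eq_sum_range,
      Nat.add_sub_cancel]
    simp only [ite_not]
  rw [hshift, hshift]
  refine Function.Periodic.sum_range_mul (fun k => ?_) T
  simp only [← add_assoc, hf (1 + k), Nat.dvd_add_left hpN]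

section InverseSquares

variable {p t : ℕ}

theorem ZMod.isUnit_natCast_prime_pow_of_lt {q : ℕ} (hp : p.Prime) (ht : t ≠ 0) (hq : 0 < q)
    (hqp : q < p) : IsUnit (q : ZMod (p ^ t)) :=
  (ZMod.isUnit_natCast_iff_not_dvd_pow hp (Nat.pos_of_ne_zero ht)).2
    (Nat.not_dvd_of_pos_of_lt hq hqp)

theorem ZMod.isUnit_two_prime_pow (hp : p.Prime) (hp3 : 3 < p) (ht : t ≠ 0) :
    IsUnit (2 : ZMod (p ^ t)) := by
  exact_mod_cast ZMod.isUnit_natCast_prime_pow_of_lt hp ht two_pos (by omega)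

theorem isUnit_natCast_of_mem_nonMultiples {n k : ℕ} (hp : p.Prime) (ht : t ≠ 0)
    (hk : k ∈ nonMultiples p n) : IsUnit (k : ZMod (p ^ t)) :=
  (ZMod.isUnit_natCast_iff_not_dvd_pow hp (Nat.pos_of_ne_zero ht)).2 (mem_nonMultiples.1 hk).2

theorem sum_nonMultiples_prime_pow_inv_sq (hp : p.Prime) (hp3 : 3 < p) (ht : t ≠ 0) :
    ∑ k ∈ nonMultiples p (p ^ t), ((k : ZMod (p ^ t))⁻¹) ^ 2 = 0 := by
  have : NeZero (p ^ t) := ⟨pow_ne_zero t hp.ne_zero⟩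
  have hcop : ∀ k ∈ nonMultiples p (p ^ t), k.Coprime (p ^ t) := fun k hk =>
    (ZMod.isUnit_iff_coprime k _).1 (isUnit_natCast_of_mem_nonMultiples hp ht hk)
  have h2 := ZMod.isUnit_two_prime_pow hp hp3 ht
  have h3 : IsUnit ((h2.unit : ZMod (p ^ t)) ^ 2 - 1) := by
    rw [IsUnit.unit_spec, show (2 : ZMod (p ^ t)) ^ 2 - 1 = ((3 : ℕ) : ZMod (p ^ t)) by norm_num]
    exact ZMod.isUnit_natCast_prime_pow_of_lt hp ht three_pos (by omega)
  calc ∑ k ∈ nonMultiples p (p ^ t), ((k : ZMod (p ^ t))⁻¹) ^ 2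
      = ∑ x : (ZMod (p ^ t))ˣ, ((x⁻¹ : (ZMod (p ^ t))ˣ) : ZMod (p ^ t)) ^ 2 := by
        refine sum_bij' (fun k hk => ZMod.unitOfCoprime k (hcop k hk))
          (fun x _ => (x : ZMod (p ^ t)).val) (fun _ _ => mem_univ _) ?_ ?_ ?_ ?_
        · intro x _
          have hndvd : ¬ p ∣ (x : ZMod (p ^ t)).val := hp.coprime_iff_not_dvd.1
            ((ZMod.val_coe_unit_coprime x).coprime_dvd_right (dvd_pow_self p ht)).symm
          have hpos : (x : ZMod (p ^ t)).val ≠ 0 := fun h => hndvd (h ▸ dvd_zero p)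
          exact mem_nonMultiples.2 ⟨⟨by omega, (ZMod.val_lt _).le⟩, hndvd⟩
        · intro k hk
          have hkp : k ≠ p ^ t := fun h => (mem_nonMultiples.1 hk).2 (h ▸ dvd_pow_self p ht)
          have hkle := (mem_nonMultiples.1 hk).1.2
          rw [ZMod.coe_unitOfCoprime, ZMod.val_cast_of_lt (by omega)]
        · exact fun x _ => Units.ext (by simp)
        · intro k hk
          rw [← ZMod.inv_coe_unit, ZMod.coe_unitOfCoprime]
    _ = ∑ x : (ZMod (p ^ t))ˣ, (x : ZMod (p ^ t)) ^ 2 :=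
        Fintype.sum_equiv (Equiv.inv _) _ _ fun _ => rfl
    _ = 0 := sum_units_sq_eq_zero h2.unit h3

theorem sum_nonMultiples_inv_sq_eq_zero {n : ℕ} (hp : p.Prime) (hp3 : 3 < p) (ht : t ≠ 0)
    (hn : p ^ t ∣ n) : ∑ k ∈ nonMultiples p n, ((k : ZMod (p ^ t))⁻¹) ^ 2 = 0 := by
  obtain ⟨T, rfl⟩ := hn
  have hperiodic : Function.Periodic (fun k : ℕ => ((k : ZMod (p ^ t))⁻¹) ^ 2) (p ^ t) :=
    fun k => by simp
  rw [mul_comm, sum_nonMultiples_mul_of_periodic hperiodic (dvd_pow_self p ht),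
    sum_nonMultiples_prime_pow_inv_sq hp hp3 ht, smul_zero]

theorem sum_lowerNonMultiples_inv_sq_eq_zero {n : ℕ} (hp : p.Prime) (hp3 : 3 < p)
    (ht : t ≠ 0) (hn : p ^ t ∣ n) :
    ∑ k ∈ (nonMultiples p n).filter (2 * · < n), ((k : ZMod (p ^ t))⁻¹) ^ 2 = 0 := by
  have hsymm : ∀ k ∈ nonMultiples p n,
      (((n - k : ℕ) : ZMod (p ^ t))⁻¹) ^ 2 = ((k : ZMod (p ^ t))⁻¹) ^ 2 := by
    intro k hk
    have hunit := isUnit_natCast_of_mem_nonMultiples hp ht hk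
    rw [Nat.cast_sub (mem_nonMultiples.1 hk).1.2, (ZMod.natCast_eq_zero_iff n _).2 hn, zero_sub,
      ZMod.inv_eq_of_mul_eq_one _ _ (-(k : ZMod (p ^ t))⁻¹)
        (by rw [neg_mul_neg, ZMod.mul_inv_of_unit _ hunit]), neg_sq]
  have hdouble := sum_nonMultiples_eq_sum_add_sub (hp.odd_of_ne_two (by omega))
    ((dvd_pow_self p ht).trans hn) fun k => ((k : ZMod (p ^ t))⁻¹) ^ 2
  rw [sum_nonMultiples_inv_sq_eq_zero hp hp3 ht hn, sum_congr rfl fun k hk =>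
    congrArg _ (hsymm k (mem_filter.1 hk).1)] at hdouble
  simp only [← two_mul, ← mul_sum] at hdouble
  exact (ZMod.isUnit_two_prime_pow hp hp3 ht).mul_right_eq_zero.1 hdouble.symm

theorem pow_dvd_sum_prod_erase {n : ℕ} (hp : p.Prime) (hp3 : 3 < p) (ht : t ≠ 0)
    (hn : p ^ t ∣ n) :
    p ^ t ∣ ∑ k ∈ (nonMultiples p n).filter (2 * · < n),
      ∏ j ∈ ((nonMultiples p n).filter (2 * · < n)).erase k, j * (n - j) := by
  -- modulo `p ^ t` the factor `j (n - j)` is `-j ^ 2`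
  have huv : ∀ k ∈ (nonMultiples p n).filter (2 * · < n),
      ((k * (n - k) : ℕ) : ZMod (p ^ t)) * -((k : ZMod (p ^ t))⁻¹) ^ 2 = 1 := by
    intro k hk
    have hk := (mem_filter.1 hk).1
    rw [Nat.cast_mul, Nat.cast_sub (mem_nonMultiples.1 hk).1.2,
      (ZMod.natCast_eq_zero_iff n _).2 hn]
    linear_combination (1 + (k : ZMod (p ^ t)) * (k : ZMod (p ^ t))⁻¹) *
      ZMod.mul_inv_of_unit _ (isUnit_natCast_of_mem_nonMultiples hp ht hk)
  rw [← ZMod.natCast_eq_zero_iff]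
  push_cast only [Nat.cast_sum, Nat.cast_prod]
  rw [sum_prod_erase_eq_prod_mul_sum huv, sum_neg_distrib,
    sum_lowerNonMultiples_inv_sq_eq_zero hp hp3 ht hn, neg_zero, mul_zero]

end InverseSquares

theorem prod_nonMultiples_mul_add_modEq {p α β γ b c : ℕ} (hp : p.Prime) (hp3 : 3 < p)
    (hbc : p ^ α ∣ b + c) (hb : p ^ β ∣ b) (hc : p ^ γ ∣ c) (hβ : β ≤ 1 + α + γ) :
    ∏ k ∈ nonMultiples p (b * p), (c * p + k) ≡ ∏ k ∈ nonMultiples p (b * p), k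
      [MOD p ^ (3 + α + β + γ)] := by
  set n := b * p
  set K := (nonMultiples p n).filter (2 * · < n)
  set d := (b + c) * c * p ^ 2
  have hodd : Odd p := hp.odd_of_ne_two (by omega)
  have hpn : p ∣ n := dvd_mul_left p b
  have hd : p ^ (2 + α + γ) ∣ d := by
    rw [show 2 + α + γ = α + γ + 2 by ring, pow_add, pow_add]
    exact mul_dvd_mul (mul_dvd_mul hbc hc) dvd_rfl
  have hE := pow_dvd_sum_prod_erase hp hp3 (Nat.add_one_ne_zero β)
    (show p ^ (β + 1) ∣ n from pow_succ p β ▸ mul_dvd_mul_right hb p)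
  have hpair : ∀ k ∈ K, (c * p + k) * (c * p + (n - k)) = k * (n - k) + d := by
    intro k hk
    have hkn := (mem_nonMultiples.1 (mem_filter.1 hk).1).1.2
    simp only [n, d] at hkn ⊢
    zify [hkn]
    ring
  rw [prod_nonMultiples_eq_prod_mul_sub hodd hpn, prod_nonMultiples_eq_prod_mul_sub hodd hpn,
    prod_congr rfl hpair, ← ZMod.natCast_eq_natCast_iff]
  have hdd : (d : ZMod (p ^ (3 + α + β + γ))) * d = 0 := by
    rw [← Nat.cast_mul, ZMod.natCast_eq_zero_iff]
    exact (pow_dvd_pow p (by omega : 3 + α + β + γ ≤ 2 + α + γ + (2 + α + γ))).trans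
      (pow_add p _ _ ▸ mul_dvd_mul hd hd)
  have hdE : (d : ZMod (p ^ (3 + α + β + γ))) *
      ∑ k ∈ K, ∏ j ∈ K.erase k, ((j * (n - j) : ℕ) : ZMod (p ^ (3 + α + β + γ))) = 0 := by
    push_cast only [← Nat.cast_prod, ← Nat.cast_sum, ← Nat.cast_mul]
    rw [ZMod.natCast_eq_zero_iff]
    exact (pow_dvd_pow p (by omega : 3 + α + β + γ ≤ 2 + α + γ + (β + 1))).trans
      (pow_add p _ _ ▸ mul_dvd_mul hd hE)
  push_cast only [Nat.cast_prod, Nat.cast_add]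
  rw [prod_add_of_mul_self_eq_zero hdd, hdE, add_zero]

theorem choose_mul_modEq_choose {p α β γ a b : ℕ} (hp : p.Prime) (hp3 : 3 < p) (hba : b ≤ a)
    (ha : p ^ α ∣ a) (hb : p ^ β ∣ b) (hab : p ^ γ ∣ a - b) (hβ : β ≤ 1 + α + γ) :
    (a * p).choose (b * p) ≡ a.choose b [MOD p ^ (3 + α + β + γ)] := by
  obtain ⟨c, rfl⟩ := Nat.exists_eq_add_of_le hba
  rw [Nat.add_sub_cancel_left] at hab
  have hcop : Nat.Coprime (p ^ (3 + α + β + γ)) (∏ k ∈ nonMultiples p (b * p), k) :=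
    Nat.Coprime.prod_right fun k hk =>
      Nat.Coprime.pow_left _ (hp.coprime_iff_not_dvd.2 (mem_nonMultiples.1 hk).2)
  refine Nat.ModEq.cancel_right_of_coprime hcop ?_
  rw [choose_mul_mul_prod_nonMultiples hp.pos]
  exact Nat.ModEq.mul_left _ (prod_nonMultiples_mul_add_modEq hp hp3 ha hb hab hβ)

theorem dvd_mul_choose {d N : ℕ} (h : d ∣ N) (K : ℕ) : d ∣ K * N.choose K := by
  rcases K with _ | K
  · simp
  rcases N with _ | N
  · simp
  rw [mul_comm, ← add_one_mul_choose_eq]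
  exact dvd_mul_of_dvd_left h _

theorem pow_sub_dvd_choose {p ρ σ N n : ℕ} (hp : p.Prime) (hN : p ^ ρ ∣ N) (hn : ¬ p ∣ n) :
    p ^ (ρ - σ) ∣ N.choose (p ^ σ * n) := by
  rcases le_total ρ σ with h | h
  · simp [Nat.sub_eq_zero_of_le h]
  have hdvd := dvd_mul_choose hN (p ^ σ * n)
  rw [← Nat.add_sub_cancel' h, pow_add, mul_assoc] at hdvd
  exact (Nat.Coprime.pow_left _ (hp.coprime_iff_not_dvd.2 hn)).dvd_of_dvd_mul_left
    (Nat.dvd_of_mul_dvd_mul_left (pow_pos hp.pos σ) hdvd)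

theorem pow_sub_pow_dvd {R : Type*} [CommRing R] {a b x y : R} (hx : a ∣ x) (hy : a ∣ y)
    (hxy : b ∣ x - y) (n : ℕ) : a ^ (n - 1) * b ∣ x ^ n - y ^ n := by
  rw [← geom_sum₂_mul]
  refine mul_dvd_mul (dvd_sum fun i hi => ?_) hxy
  have hsplit : n - 1 = i + (n - 1 - i) := by have := mem_range.1 hi; omega
  calc a ^ (n - 1) = a ^ i * a ^ (n - 1 - i) := by rw [← pow_add, ← hsplit]
    _ ∣ x ^ i * y ^ (n - 1 - i) := mul_dvd_mul (pow_dvd_pow_of_dvd hx i) (pow_dvd_pow_of_dvd hy _)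

theorem Nat.ModEq.pow_mul_pow_of_pow_dvd {q v w u N A B x x' y y' : ℕ} (hx : q ^ v ∣ x)
    (hx' : q ^ v ∣ x') (hxx : x ≡ x' [MOD q ^ w]) (hyy : y ≡ y' [MOD q ^ u])
    (hu : N ≤ A * v + u) (hw : N ≤ (A - 1) * v + w) :
    x ^ A * y ^ B ≡ x' ^ A * y' ^ B [MOD q ^ N] := by
  rw [Nat.modEq_iff_dvd] at hxx hyy ⊢
  push_cast at hxx hyy ⊢
  have hxZ : (q : ℤ) ^ v ∣ x := by exact_mod_cast hx
  have hxZ' : (q : ℤ) ^ v ∣ x' := by exact_mod_cast hx'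
  have hxA : (q : ℤ) ^ (A * v) ∣ (x' : ℤ) ^ A := by
    rw [mul_comm, pow_mul]
    exact pow_dvd_pow_of_dvd hxZ' A
  have hyB : (q : ℤ) ^ u ∣ (y' : ℤ) ^ B - (y : ℤ) ^ B := hyy.trans (sub_dvd_pow_sub_pow _ _ B)
  have hxAsub : (q : ℤ) ^ ((A - 1) * v + w) ∣ (x' : ℤ) ^ A - (x : ℤ) ^ A := by
    rw [pow_add, mul_comm (A - 1), pow_mul]
    exact pow_sub_pow_dvd hxZ' hxZ hxx A
  rw [show (x' : ℤ) ^ A * y' ^ B - x ^ A * y ^ B =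
    x' ^ A * (y' ^ B - y ^ B) + (x' ^ A - x ^ A) * y ^ B by ring]
  exact dvd_add ((pow_dvd_pow _ hu).trans (pow_add (q : ℤ) _ _ ▸ mul_dvd_mul hxA hyB))
    ((pow_dvd_pow _ hw).trans (dvd_mul_of_dvd_left hxAsub _))

theorem summand_congruence_A_ge_three_general (p : ℕ) (hp : p.Prime) (hp3 : 3 < p)
    (A B m n r s : ℕ) (hA : 3 ≤ A) (hn : 1 ≤ n)
    (hs : 1 ≤ s) (hsr : s ≤ r) (hle : n * p ^ s ≤ m * p ^ r) :
    (Nat.choose (m * p ^ r) (n * p ^ s)) ^ A * (Nat.choose (2 * (n * p ^ s)) (n * p ^ s)) ^ B ≡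
      (Nat.choose (m * p ^ (r - 1)) (n * p ^ (s - 1))) ^ A *
        (Nat.choose (2 * (n * p ^ (s - 1))) (n * p ^ (s - 1))) ^ B [MOD p ^ (3 * r)] := by
  obtain ⟨e, n', hn', rfl⟩ := Nat.exists_eq_pow_mul_and_not_dvd (by omega : n ≠ 0) p hp.one_lt.ne'
  obtain ⟨s, rfl⟩ := Nat.exists_eq_add_of_le' hs
  obtain ⟨r, rfl⟩ := Nat.exists_eq_add_of_le' (hs.trans hsr)
  set τ := e + s
  have hb : p ^ e * n' * p ^ s = p ^ τ * n' := by rw [pow_add]; ring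
  have hbp : p ^ e * n' * p ^ (s + 1) = p ^ τ * n' * p := by rw [pow_succ, ← mul_assoc, hb]
  rw [hbp, pow_succ, ← mul_assoc] at hle
  simp only [Nat.add_sub_cancel]
  rw [hb, hbp, pow_succ, ← mul_assoc, ← mul_assoc 2]
  have hba : p ^ τ * n' ≤ m * p ^ r := Nat.le_of_mul_le_mul_right hle hp.pos
  -- `β` is capped at `2 r + 1` to keep `β ≤ 1 + α + γ`
  have hX := choose_mul_modEq_choose (α := r) (β := min τ (2 * r + 1)) (γ := min τ r) hp hp3 hba
    (dvd_mul_left _ _) ((pow_dvd_pow p (min_le_left _ _)).trans (dvd_mul_right _ _))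
    (Nat.dvd_sub ((pow_dvd_pow p (min_le_right _ _)).trans (dvd_mul_left _ _))
      ((pow_dvd_pow p (min_le_left _ _)).trans (dvd_mul_right _ _))) (by omega)
  have hY := choose_mul_modEq_choose (α := τ) (β := τ) (γ := τ) (a := 2 * (p ^ τ * n'))
    (b := p ^ τ * n') hp hp3 (by omega)
    (dvd_mul_of_dvd_right (dvd_mul_right _ _) 2) (dvd_mul_right _ _)
    (by rw [two_mul, Nat.add_sub_cancel]; exact dvd_mul_right _ _) (by omega)
  have hvX : p ^ (r - τ) ∣ (m * p ^ r * p).choose (p ^ τ * n' * p) := by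
    have := pow_sub_dvd_choose (ρ := r + 1) (σ := τ + 1) hp (dvd_mul_left _ m) hn'
    rw [Nat.add_sub_add_right] at this
    convert this using 2 <;> ring
  have hvX' : p ^ (r - τ) ∣ (m * p ^ r).choose (p ^ τ * n') :=
    pow_sub_dvd_choose hp (dvd_mul_left _ m) hn'
  have hAu : 3 * (r - τ) ≤ A * (r - τ) := Nat.mul_le_mul_right _ hA
  have hAw : 2 * (r - τ) ≤ (A - 1) * (r - τ) := Nat.mul_le_mul_right _ (by omega)
  exact hX.pow_mul_pow_of_pow_dvd hvX hvX' hY (by omega) (by omega)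

theorem summand_congruence_A_ge_three (p : ℕ) (hp : p.Prime) (hp3 : 3 < p)
    (A B m n r s : ℕ) (hA : 3 ≤ A) (hB : 1 ≤ B) (hm : 1 ≤ m) (hn : 1 ≤ n)
    (hs : 1 ≤ s) (hsr : s ≤ r) (hle : n * p ^ s ≤ m * p ^ r) :
    (Nat.choose (m * p ^ r) (n * p ^ s)) ^ A * (Nat.choose (2 * (n * p ^ s)) (n * p ^ s)) ^ B ≡
      (Nat.choose (m * p ^ (r - 1)) (n * p ^ (s - 1))) ^ A *
        (Nat.choose (2 * (n * p ^ (s - 1))) (n * p ^ (s - 1))) ^ B [MOD p ^ (3 * r)] :=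
  summand_congruence_A_ge_three_general p hp hp3 A B m n r s hA hn hs hsr hle
end

section
/- Let p > 3 be prime and A ≥ 3. Then Σ_{0 ≤ k ≤ mp^r, p ∤ k} binom(mp^r, k)^A · binom(2k,k)^B ≡ 0 (mod p^{3r}) for any positive integers m, r and natural B. -/
/-- From `n * (n - 1).choose (k - 1) = n.choose k * k`. -/
theorem Nat.Coprime.dvd_choose {d n k : ℕ} (hdk : d.Coprime k) (hdn : d ∣ n) :
    d ∣ n.choose k := by
  rcases n with _ | n
  · rcases k with _ | k
    · simpa using hdk
    · simp
  rcases k with _ | k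
  · simpa using hdk
  refine hdk.dvd_of_dvd_mul_right ?_
  rw [← Nat.add_one_mul_choose_eq]
  exact hdn.mul_right _

theorem sum_not_div_vanishes_general (p : ℕ) (hp : p.Prime)
    (A B m r : ℕ) (hA : 3 ≤ A) :
    p ^ (3 * r) ∣
      ∑ k ∈ (Finset.range (m * p ^ r + 1)).filter (fun k => ¬ p ∣ k),
        (Nat.choose (m * p ^ r) k) ^ A * (Nat.choose (2 * k) k) ^ B := by
  refine Finset.dvd_sum fun k hk => Dvd.dvd.mul_right ?_ _
  have hpk : ¬ p ∣ k := (Finset.mem_filter.mp hk).2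
  have hchoose : p ^ r ∣ (m * p ^ r).choose k :=
    ((hp.coprime_iff_not_dvd.mpr hpk).pow_left r).dvd_choose (dvd_mul_left _ _)
  calc p ^ (3 * r) = (p ^ r) ^ 3 := by ring
    _ ∣ (m * p ^ r).choose k ^ 3 := pow_dvd_pow_of_dvd hchoose 3
    _ ∣ (m * p ^ r).choose k ^ A := pow_dvd_pow _ hA

theorem sum_not_div_vanishes (p : ℕ) (hp : p.Prime) (hp3 : 3 < p)
    (A B m r : ℕ) (hA : 3 ≤ A) (hm : 1 ≤ m) (hr : 1 ≤ r) :
    p ^ (3 * r) ∣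
      ∑ k ∈ (Finset.range (m * p ^ r + 1)).filter (fun k => ¬ p ∣ k),
        (Nat.choose (m * p ^ r) k) ^ A * (Nat.choose (2 * k) k) ^ B :=
  sum_not_div_vanishes_general p hp A B m r hA
end

section
/- Let p > 3 be prime, A ≥ 3, B ∈ ℕ, and suppose γ : ℕ → ℤ satisfies γ(p) = 1 + c·p^{k-1} for some integer c and integer weight k with 2 ≤ k < 4. Then for all m ∈ ℕ positive and r ≥ 3: C(mp^r, A, B) - γ(p)·C(mp^{r-1}, A, B) + c·p^{k-1}·C(mp^{r-2}, A, B) ≡ 0 (mod p^{3r+k-4}), where C(n,A,B) = Σ_{j=0}^n binom(n,j)^A binom(2j,j)^B. -/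
/-!
Write `C(n)` for `binomSum A B n`. Splitting `C(pM)` according to whether `p` divides the
summation index, the terms with `p ∤ i` are divisible by `p ^ (3(s+1))` when `p ^ s ∣ M`,
because `p ^ (s+1) ∣ binom(pM, i)` and `A ≥ 3`.
The terms with `i = pj` are compared with those of `C(M)` through the Jacobsthal–Kazandzidis
congruence `binom(pa, pb) ≡ binom(a, b) mod p ^ (3(w+1)) · p ^ W` for `p ^ w ∣ a, b` and
`p ^ W ∣ binom(a, b)`. Hence `C(m p^r) ≡ C(m p^(r-1)) mod p ^ (3r)`, and the three-term
combination is `(C_r - C_(r-1)) - c p^(k-1) (C_(r-1) - C_(r-2))`.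

For the Jacobsthal congruence, `binom(p(c+b), pb) / binom(c+b, b) = ∏ (pc + i) / i` over
`i ≤ pb` prime to `p`. Pairing `i` with `pb - i` turns the squared numerator into
`∏ (d i + e)` with `d i = i (pb - i)` and `e = pc (pc + pb)` divisible by `p ^ (2(w+1))`.
Modulo `e²` it differs from the squared denominator `∏ d i` by `e ∏ d · Σ 1 / d i`, and
`Σ 1 / d i ≡ -Σ i⁻²` vanishes modulo `p ^ (w+1)` for `p ≥ 5`, since scaling by `2` permutes
the units.
-/

open Finset Ring

theorem Ring.sum_inverse_sq_eq_zero {R : Type*} [CommRing R] [Fintype R]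
    (h2 : IsUnit (2 : R)) (h3 : IsUnit (3 : R)) : ∑ x : R, x⁻¹ʳ ^ 2 = 0 := by
  set S := ∑ x : R, x⁻¹ʳ ^ 2
  have hscale : S = (2 : R)⁻¹ʳ ^ 2 * S := by
    calc S = ∑ x : R, (h2.unit * x)⁻¹ʳ ^ 2 :=
          (Fintype.sum_equiv (Units.mulLeft h2.unit) _ _ fun _ => rfl).symm
      _ = (2 : R)⁻¹ʳ ^ 2 * S := by
          simp only [IsUnit.unit_spec, mul_inverse_rev, mul_pow, mul_sum, S, mul_comm]
  have h3S : 3 * S = 0 := by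
    have h22 : (2 : R) * 2⁻¹ʳ = 1 := mul_inverse_cancel _ h2
    linear_combination 4 * hscale + (2 * (2 : R)⁻¹ʳ + 1) * S * h22
  simpa [h3.mul_right_eq_zero] using h3S

theorem ZMod.sum_range_mul_natCast_s15 {M : Type*} [AddCommMonoid M] (T q : ℕ) [NeZero T]
    (f : ZMod T → M) : ∑ i ∈ range (q * T), f i = q • ∑ x : ZMod T, f x := by
  have hblock : ∑ i ∈ range T, f i = ∑ x : ZMod T, f x := by
    obtain ⟨k, rfl⟩ : ∃ k, T = k + 1 := Nat.exists_eq_succ_of_ne_zero (NeZero.ne T)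
    rw [← Fin.sum_univ_eq_sum_range]
    exact Fintype.sum_congr _ _ fun i => congrArg f (ZMod.natCast_zmod_val (n := k + 1) i)
  induction q with
  | zero => simp
  | succ q ih =>
    rw [add_mul, one_mul, sum_range_add, ih, succ_nsmul, ← hblock]
    simp

theorem ZMod.isUnit_natCast_prime_pow_iff {p v : ℕ} (hp : p.Prime) (hv : v ≠ 0) (i : ℕ) :
    IsUnit (i : ZMod (p ^ v)) ↔ ¬ p ∣ i := by
  rw [ZMod.isUnit_iff_coprime, Nat.coprime_pow_right_iff (Nat.pos_of_ne_zero hv),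
    Nat.coprime_comm, hp.coprime_iff_not_dvd]

theorem ZMod.sum_range_inverse_sq_natCast_eq_zero {p v n : ℕ} (hp : p.Prime) (hp5 : 5 ≤ p)
    (hv : v ≠ 0) (hn : p ^ v ∣ n) : ∑ i ∈ range n, (i : ZMod (p ^ v))⁻¹ʳ ^ 2 = 0 := by
  have : NeZero (p ^ v) := ⟨pow_ne_zero v hp.ne_zero⟩
  obtain ⟨q, rfl⟩ := hn
  have hunit (a : ℕ) (ha : a < 5) (ha0 : 0 < a) : IsUnit (a : ZMod (p ^ v)) :=
    (ZMod.isUnit_natCast_prime_pow_iff hp hv a).2 (Nat.not_dvd_of_pos_of_lt ha0 (by omega))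
  rw [mul_comm, sum_range_mul_natCast_s15 (p ^ v) q fun x => x⁻¹ʳ ^ 2,
    sum_inverse_sq_eq_zero (by exact_mod_cast hunit 2 (by norm_num) (by norm_num))
      (by exact_mod_cast hunit 3 (by norm_num) (by norm_num)), smul_zero]

theorem Finset.sq_dvd_prod_add_sub_prod_sub {ι R : Type*} [CommRing R] [DecidableEq ι]
    (s : Finset ι) (d : ι → R) (e : R) :
    e ^ 2 ∣
      ∏ i ∈ s, (d i + e) - ∏ i ∈ s, d i - e * ∑ i ∈ s, ∏ j ∈ s.erase i, d j := by
  induction s using Finset.induction_on with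
  | empty => simp
  | @insert a s ha ih =>
    obtain ⟨J, hJ⟩ := ih
    have herase : ∑ i ∈ insert a s, ∏ j ∈ (insert a s).erase i, d j
        = ∏ j ∈ s, d j + d a * ∑ i ∈ s, ∏ j ∈ s.erase i, d j := by
      rw [sum_insert ha, erase_insert ha, mul_sum]
      congr 1
      refine sum_congr rfl fun i hi => ?_
      rw [erase_insert_of_ne (ne_of_mem_of_not_mem hi ha).symm,
        prod_insert fun h => ha (mem_of_mem_erase h)]
    refine ⟨∑ i ∈ s, ∏ j ∈ s.erase i, d j + (d a + e) * J, ?_⟩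
    rw [prod_insert ha, prod_insert ha, herase]
    linear_combination (d a + e) * hJ

theorem Finset.sum_prod_erase_eq_prod_mul_sum_inverse {ι R : Type*} [CommSemiring R]
    [DecidableEq ι] {s : Finset ι} {d : ι → R} (hd : ∀ i ∈ s, IsUnit (d i)) :
    ∑ i ∈ s, ∏ j ∈ s.erase i, d j = (∏ i ∈ s, d i) * ∑ i ∈ s, (d i)⁻¹ʳ := by
  rw [mul_sum]
  refine sum_congr rfl fun i hi => ?_
  rw [← prod_erase_mul s d hi, mul_inverse_cancel_right _ _ (hd i hi)]

theorem pow_mul_dvd_pow_succ_sub_pow_succ {R : Type*} [CommRing R] {a b x y : R}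
    (hx : a ∣ x) (hy : a ∣ y) (hxy : b ∣ x - y) (n : ℕ) :
    a ^ n * b ∣ x ^ (n + 1) - y ^ (n + 1) := by
  rw [← geom_sum₂_mul]
  refine mul_dvd_mul (dvd_sum fun i hi => ?_) hxy
  have hi : n = i + (n + 1 - 1 - i) := by rw [mem_range] at hi; omega
  calc a ^ n = a ^ i * a ^ (n + 1 - 1 - i) := by rw [← pow_add, ← hi]
    _ ∣ x ^ i * y ^ (n + 1 - 1 - i) :=
      mul_dvd_mul (pow_dvd_pow_of_dvd hx i) (pow_dvd_pow_of_dvd hy _)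

def primeToProd (p n y : ℕ) : ℕ :=
  ∏ i ∈ (range (n + 1)).filter (fun i => ¬ p ∣ i), (y + i)

theorem primeToProd_succ (p n y : ℕ) : primeToProd p (n + 1) y =
    if p ∣ n + 1 then primeToProd p n y else (y + (n + 1)) * primeToProd p n y := by
  unfold primeToProd
  rw [range_add_one (n := n + 1), filter_insert]
  split_ifs with h
  · rfl
  · exact prod_insert (by simp)

theorem ascFactorial_eq_pow_mul_primeToProd (p c k : ℕ) :
    (p * c + 1).ascFactorial k
      = p ^ (k / p) * (c + 1).ascFactorial (k / p) * primeToProd p k (p * c) := by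
  induction k with
  | zero => simp [primeToProd, filter_singleton]
  | succ k ih =>
    rw [Nat.ascFactorial_succ, ih, primeToProd_succ]
    by_cases hk : p ∣ k + 1
    · have hk' : k + 1 = p * (k / p + 1) := by
        rw [← Nat.succ_div_of_dvd hk, Nat.mul_div_cancel' hk]
      rw [if_pos hk, Nat.succ_div_of_dvd hk, Nat.ascFactorial_succ]
      linear_combination
        (p ^ (k / p) * (c + 1).ascFactorial (k / p) * primeToProd p k (p * c)) * hk'
    · rw [if_neg hk, Nat.succ_div_of_not_dvd hk]
      ring

theorem prod_primeTo_reflect {M : Type*} [CommMonoid M] {p n : ℕ} (hpn : p ∣ n)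
    (f : ℕ → M) :
    ∏ i ∈ (range (n + 1)).filter (fun i => ¬ p ∣ i), f (n - i)
      = ∏ i ∈ (range (n + 1)).filter (fun i => ¬ p ∣ i), f i := by
  have hmem : ∀ i ∈ (range (n + 1)).filter (fun i => ¬ p ∣ i),
      n - i ∈ (range (n + 1)).filter (fun i => ¬ p ∣ i) := by
    intro i hi
    simp only [mem_filter, mem_range] at hi ⊢
    exact ⟨by omega, by rw [Nat.dvd_sub_iff_right (by omega) hpn]; exact hi.2⟩
  refine prod_nbij' (n - ·) (n - ·) hmem hmem (fun i hi => ?_) (fun i hi => ?_) fun _ _ => rfl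
    <;> simp only [mem_filter, mem_range] at hi <;> omega

theorem primeToProd_sq {p n : ℕ} (hpn : p ∣ n) (y : ℕ) :
    primeToProd p n y ^ 2
      = ∏ i ∈ (range (n + 1)).filter (fun i => ¬ p ∣ i), (i * (n - i) + y * (y + n)) := by
  rw [sq, primeToProd]
  nth_rw 2 [← prod_primeTo_reflect hpn]
  rw [← prod_mul_distrib]
  refine prod_congr rfl fun i hi => ?_
  obtain ⟨k, rfl⟩ : ∃ k, n = i + k :=
    ⟨n - i, by simp only [mem_filter, mem_range] at hi; omega⟩
  simp only [Nat.add_sub_cancel_left]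
  ring

theorem coprime_primeToProd_zero {p : ℕ} (hp : p.Prime) (n : ℕ) :
    Nat.Coprime p (primeToProd p n 0) :=
  Nat.Coprime.prod_right fun i hi => by
    simpa [hp.coprime_iff_not_dvd] using (mem_filter.mp hi).2

theorem choose_mul_mul_primeToProd {p : ℕ} (hp : 0 < p) (c b : ℕ) :
    (p * (c + b)).choose (p * b) * primeToProd p (p * b) 0
      = (c + b).choose b * primeToProd p (p * b) (p * c) := by
  have hpb : p * b / p = b := Nat.mul_div_cancel_left b hp
  have hc := ascFactorial_eq_pow_mul_primeToProd p c (p * b)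
  have h0 := ascFactorial_eq_pow_mul_primeToProd p 0 (p * b)
  rw [Nat.ascFactorial_eq_factorial_mul_choose, Nat.ascFactorial_eq_factorial_mul_choose, hpb,
    ← mul_add] at hc
  rw [mul_zero, zero_add, Nat.one_ascFactorial, Nat.one_ascFactorial, hpb] at h0
  have hpos : 0 < p ^ b * b.factorial := by positivity
  refine Nat.eq_of_mul_eq_mul_left hpos ?_
  calc p ^ b * b.factorial * ((p * (c + b)).choose (p * b) * primeToProd p (p * b) 0)
      = (p * b).factorial * (p * (c + b)).choose (p * b) := by rw [h0]; ring
    _ = p ^ b * b.factorial * ((c + b).choose b * primeToProd p (p * b) (p * c)) := by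
      rw [hc]; ring

theorem sum_prod_erase_primeTo_eq_zero {p v n : ℕ} (hp : p.Prime) (hp5 : 5 ≤ p) (hv : v ≠ 0)
    (hn : p ^ v ∣ n) :
    ∑ i ∈ (range (n + 1)).filter (fun i => ¬ p ∣ i),
      ∏ j ∈ ((range (n + 1)).filter (fun i => ¬ p ∣ i)).erase i,
        ((j * (n - j) : ℕ) : ZMod (p ^ v)) = 0 := by
  set I := (range (n + 1)).filter (fun i => ¬ p ∣ i)
  have hn0 : (n : ZMod (p ^ v)) = 0 := (ZMod.natCast_eq_zero_iff _ _).2 hn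
  have hd : ∀ i ∈ I, ((i * (n - i) : ℕ) : ZMod (p ^ v)) = -1 * (i : ZMod (p ^ v)) ^ 2 := by
    intro i hi
    rw [Nat.cast_mul, Nat.cast_sub (by simp only [I, mem_filter, mem_range] at hi; omega), hn0]
    ring
  rw [sum_prod_erase_eq_prod_mul_sum_inverse fun i hi => ?unit]
  case unit =>
    rw [hd i hi]
    exact isUnit_one.neg.mul
      (IsUnit.pow 2 ((ZMod.isUnit_natCast_prime_pow_iff hp hv i).2 (mem_filter.mp hi).2))
  -- `Ring.inverse` vanishes on non-units, so the terms with `p ∣ i` may be added back.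
  have hsum : ∑ i ∈ I, (i : ZMod (p ^ v))⁻¹ʳ ^ 2 = 0 := by
    rw [sum_filter_of_ne fun i _ hi => ?_, sum_range_succ, hn0, inverse_zero,
      ZMod.sum_range_inverse_sq_natCast_eq_zero hp hp5 hv hn]
    · ring
    · contrapose! hi
      rw [inverse_non_unit _ (mt (ZMod.isUnit_natCast_prime_pow_iff hp hv i).1 (not_not.2 hi))]
      ring
  rw [sum_congr rfl fun i hi => by rw [hd i hi, mul_inverse_rev, ← inverse_pow], ← sum_mul,
    hsum, zero_mul, mul_zero]

theorem pow_dvd_primeToProd_sq_sub {p v n y : ℕ} (hp : p.Prime) (hp5 : 5 ≤ p) (hv : v ≠ 0)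
    (hy : p ^ v ∣ y) (hn : p ^ v ∣ n) :
    (p : ℤ) ^ (3 * v) ∣ (primeToProd p n y : ℤ) ^ 2 - (primeToProd p n 0 : ℤ) ^ 2 := by
  have hpn : p ∣ n := (dvd_pow_self p hv).trans hn
  have he : (p : ℤ) ^ (2 * v) ∣ ((y * (y + n) : ℕ) : ℤ) := by
    rw [two_mul, pow_add]
    exact_mod_cast mul_dvd_mul hy (dvd_add hy hn)
  have hS := sum_prod_erase_primeTo_eq_zero hp hp5 hv hn
  set I := (range (n + 1)).filter (fun i => ¬ p ∣ i)
  set d : ℕ → ℤ := fun i => ((i * (n - i) : ℕ) : ℤ)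
  set e : ℤ := ((y * (y + n) : ℕ) : ℤ)
  replace hS : (p : ℤ) ^ v ∣ ∑ i ∈ I, ∏ j ∈ I.erase i, d j := by
    rw [← Nat.cast_pow, ← ZMod.intCast_zmod_eq_zero_iff_dvd]
    simpa only [Int.cast_sum, Int.cast_prod, Int.cast_natCast, d] using hS
  have hprod : (primeToProd p n y : ℤ) ^ 2 - (primeToProd p n 0 : ℤ) ^ 2
      = ∏ i ∈ I, (d i + e) - ∏ i ∈ I, d i := by
    simp only [← Nat.cast_pow, primeToProd_sq hpn, zero_mul, add_zero, Nat.cast_prod,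
      Nat.cast_add, d, e, I]
  obtain ⟨J, hJ⟩ := sq_dvd_prod_add_sub_prod_sub I d e
  rw [hprod, eq_add_of_sub_eq hJ]
  refine dvd_add (dvd_mul_of_dvd_left ?_ J) ?_
  · exact (pow_dvd_pow (p : ℤ) (by omega : 3 * v ≤ 2 * v * 2)).trans
      (by rw [pow_mul, sq, sq]; exact mul_dvd_mul he he)
  · rw [show 3 * v = 2 * v + v by ring, pow_add]
    exact mul_dvd_mul he hS

theorem pow_dvd_primeToProd_sub {p v n y : ℕ} (hp : p.Prime) (hp5 : 5 ≤ p) (hv : v ≠ 0)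
    (hy : p ^ v ∣ y) (hn : p ^ v ∣ n) :
    (p : ℤ) ^ (3 * v) ∣ (primeToProd p n y : ℤ) - primeToProd p n 0 := by
  have : Fact p.Prime := ⟨hp⟩
  have hpy : (y : ZMod p) = 0 :=
    (ZMod.natCast_eq_zero_iff _ _).2 ((dvd_pow_self p hv).trans hy)
  have hsum : ¬ p ∣ primeToProd p n y + primeToProd p n 0 := by
    have hcast : (primeToProd p n y : ZMod p) = primeToProd p n 0 := by
      simp [primeToProd, hpy]
    have h2 : (2 : ZMod p) ≠ 0 := by
      exact_mod_cast (ZMod.natCast_eq_zero_iff 2 p).not.2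
        (Nat.not_dvd_of_pos_of_lt two_pos (by omega))
    have hN0 : (primeToProd p n 0 : ZMod p) ≠ 0 :=
      (ZMod.natCast_eq_zero_iff _ _).not.2
        (hp.coprime_iff_not_dvd.1 (coprime_primeToProd_zero hp n))
    rw [← ZMod.natCast_eq_zero_iff, Nat.cast_add, hcast, ← two_mul]
    exact mul_ne_zero h2 hN0
  have hcop : IsCoprime ((p : ℤ) ^ (3 * v)) (primeToProd p n y + primeToProd p n 0 : ℕ) :=
    (Nat.isCoprime_iff_coprime.2 (hp.coprime_iff_not_dvd.2 hsum)).pow_left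
  refine hcop.dvd_of_dvd_mul_right ?_
  rw [Nat.cast_add, mul_comm (_ - _), ← sq_sub_sq]
  exact pow_dvd_primeToProd_sq_sub hp hp5 hv hy hn

theorem pow_dvd_choose_mul_sub_choose {p w W a b : ℕ} (hp : p.Prime) (hp5 : 5 ≤ p)
    (hba : b ≤ a) (ha : p ^ w ∣ a) (hb : p ^ w ∣ b) (hW : p ^ W ∣ a.choose b) :
    (p : ℤ) ^ (3 * (w + 1) + W) ∣ ((p * a).choose (p * b) : ℤ) - a.choose b := by
  obtain ⟨c, rfl⟩ : ∃ c, a = c + b := ⟨a - b, by omega⟩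
  have hc : p ^ w ∣ c := by simpa using Nat.dvd_sub ha hb
  have hid : (((p * (c + b)).choose (p * b) : ℤ) - (c + b).choose b) * primeToProd p (p * b) 0
      = (c + b).choose b * ((primeToProd p (p * b) (p * c) : ℤ) - primeToProd p (p * b) 0) := by
    have := congrArg (Nat.cast : ℕ → ℤ) (choose_mul_mul_primeToProd hp.pos c b)
    push_cast at this
    linear_combination this
  have hN := pow_dvd_primeToProd_sub (v := w + 1) (y := p * c) (n := p * b) hp hp5
    w.succ_ne_zero (by rw [pow_succ']; exact mul_dvd_mul_left p hc)
    (by rw [pow_succ']; exact mul_dvd_mul_left p hb)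
  have hcop : IsCoprime ((p : ℤ) ^ (3 * (w + 1) + W)) (primeToProd p (p * b) 0 : ℕ) :=
    (Nat.isCoprime_iff_coprime.2 (coprime_primeToProd_zero hp _)).pow_left
  refine hcop.dvd_of_dvd_mul_right ?_
  rw [hid, pow_add, mul_comm]
  exact mul_dvd_mul (by exact_mod_cast hW) hN

theorem Nat.pow_sub_factorization_dvd_choose {p u n k : ℕ} (hp : p.Prime) (hk : k ≠ 0)
    (hkn : k ≤ n) (hu : p ^ u ∣ n) : p ^ (u - k.factorization p) ∣ n.choose k := by
  obtain ⟨n, rfl⟩ := Nat.exists_eq_succ_of_ne_zero (by omega : n ≠ 0)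
  obtain ⟨k, rfl⟩ := Nat.exists_eq_succ_of_ne_zero hk
  have hC : (n + 1).choose (k + 1) ≠ 0 := (Nat.choose_pos hkn).ne'
  have h : p ^ u ∣ (n + 1).choose (k + 1) * (k + 1) :=
    Nat.add_one_mul_choose_eq n k ▸ dvd_mul_of_dvd_left hu _
  rw [hp.pow_dvd_iff_le_factorization (mul_ne_zero hC k.succ_ne_zero),
    Nat.factorization_mul hC k.succ_ne_zero, Finsupp.add_apply] at h
  rw [hp.pow_dvd_iff_le_factorization hC]
  omega

theorem range_filter_dvd_eq_image {p : ℕ} (hp : 0 < p) (M : ℕ) :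
    (range (p * M + 1)).filter (p ∣ ·) = (range (M + 1)).image (p * ·) := by
  ext i
  simp only [mem_filter, mem_range, mem_image]
  constructor
  · rintro ⟨hi, j, rfl⟩
    exact ⟨j, Nat.lt_succ_of_le (Nat.le_of_mul_le_mul_left (Nat.le_of_lt_succ hi) hp), rfl⟩
  · rintro ⟨j, hj, rfl⟩
    exact ⟨Nat.lt_succ_of_le (Nat.mul_le_mul_left p (Nat.le_of_lt_succ hj)), dvd_mul_right p j⟩

def binomSum (A B n : ℕ) : ℕ := ∑ j ∈ range (n + 1), n.choose j ^ A * (2 * j).choose j ^ B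

theorem pow_dvd_choose_pow_mul_sub {p s M j A B : ℕ} (hp : p.Prime) (hp5 : 5 ≤ p) (hA : 3 ≤ A)
    (hM : p ^ s ∣ M) (hj0 : j ≠ 0) (hjM : j ≤ M) :
    (p : ℤ) ^ (3 * (s + 1)) ∣
      ((p * M).choose (p * j) : ℤ) ^ A * ((2 * (p * j)).choose (p * j) : ℤ) ^ B
        - (M.choose j : ℤ) ^ A * ((2 * j).choose j : ℤ) ^ B := by
  set t := j.factorization p
  set w := min t s
  set e := s - w
  have hwj : p ^ w ∣ j := (pow_dvd_pow p (min_le_left t s)).trans (Nat.ordProj_dvd j p)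
  have hwM : p ^ w ∣ M := (pow_dvd_pow p (min_le_right t s)).trans hM
  have hY : p ^ e ∣ M.choose j :=
    (pow_dvd_pow p (by omega)).trans (Nat.pow_sub_factorization_dvd_choose hp hj0 hjM hM)
  have hX : (p : ℤ) ^ e ∣ (p * M).choose (p * j) := by
    have hfac : (p * j).factorization p = t + 1 := by
      rw [Nat.factorization_mul hp.ne_zero hj0, Finsupp.add_apply, hp.factorization_self,
        add_comm]
    have h := Nat.pow_sub_factorization_dvd_choose hp (mul_ne_zero hp.ne_zero hj0)
      (Nat.mul_le_mul_left p hjM) (by rw [pow_succ']; exact mul_dvd_mul_left p hM)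
    rw [hfac] at h
    exact_mod_cast (pow_dvd_pow p (by omega)).trans h
  have hXY := pow_dvd_choose_mul_sub_choose hp hp5 hjM hwM hwj hY
  have hUV :
      (p : ℤ) ^ (3 * (w + 1)) ∣ ((2 * (p * j)).choose (p * j) : ℤ) - (2 * j).choose j := by
    simpa [mul_left_comm p 2 j] using
      pow_dvd_choose_mul_sub_choose (W := 0) hp hp5 (by omega) (dvd_mul_of_dvd_right hwj 2) hwj
        (one_dvd _)
  have he3 : e * 3 ≤ e * A := Nat.mul_le_mul_left e hA
  obtain ⟨A, rfl⟩ : ∃ A', A = A' + 1 := ⟨A - 1, by omega⟩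
  have hexp : 3 * (s + 1) ≤ e * A + (3 * (w + 1) + e) := by
    have : e * (A + 1) = e * A + e := by ring
    omega
  rw [show ∀ x y u v : ℤ, x * u - y * v = x * (u - v) + (x - y) * v by intros; ring]
  refine dvd_add ?_ (dvd_mul_of_dvd_left ?_ _)
  · refine (pow_dvd_pow (p : ℤ) (by omega : 3 * (s + 1) ≤ e * (A + 1) + 3 * (w + 1))).trans ?_
    rw [pow_add, pow_mul]
    exact mul_dvd_mul (pow_dvd_pow_of_dvd hX _) (hUV.trans (sub_dvd_pow_sub_pow _ _ _))
  · refine (pow_dvd_pow (p : ℤ) hexp).trans ?_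
    rw [pow_add, pow_mul]
    exact pow_mul_dvd_pow_succ_sub_pow_succ hX (by exact_mod_cast hY) hXY A

theorem pow_dvd_binomSum_mul_sub {p s M A B : ℕ} (hp : p.Prime) (hp5 : 5 ≤ p) (hA : 3 ≤ A)
    (hM : p ^ s ∣ M) :
    (p : ℤ) ^ (3 * (s + 1)) ∣ (binomSum A B (p * M) : ℤ) - binomSum A B M := by
  set f : ℕ → ℤ := fun i => ((p * M).choose i : ℤ) ^ A * ((2 * i).choose i : ℤ) ^ B
  have hsplit : (binomSum A B (p * M) : ℤ) = ∑ j ∈ range (M + 1), f (p * j)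
      + ∑ i ∈ (range (p * M + 1)).filter (¬ p ∣ ·), f i := by
    rw [binomSum, ← sum_filter_add_sum_filter_not _ (p ∣ ·), range_filter_dvd_eq_image hp.pos,
      sum_image fun _ _ _ _ h => Nat.eq_of_mul_eq_mul_left hp.pos h]
    push_cast
    rfl
  rw [hsplit, binomSum, Nat.cast_sum, add_sub_right_comm, ← sum_sub_distrib]
  refine dvd_add (dvd_sum fun j hj => ?_) (dvd_sum fun i hi => ?_)
  · rcases eq_or_ne j 0 with rfl | hj0
    · simp [f]
    · push_cast
      exact pow_dvd_choose_pow_mul_sub hp hp5 hA hM hj0 (by simpa [Nat.lt_succ_iff] using hj)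
  · obtain ⟨hi, hpi⟩ := mem_filter.mp hi
    have hi0 : i ≠ 0 := by rintro rfl; exact hpi (dvd_zero p)
    have h := Nat.pow_sub_factorization_dvd_choose hp hi0 (Nat.le_of_lt_succ (mem_range.mp hi))
      (by rw [pow_succ']; exact mul_dvd_mul_left p hM)
    rw [Nat.factorization_eq_zero_of_not_dvd hpi, Nat.sub_zero] at h
    refine dvd_mul_of_dvd_left ((pow_dvd_pow _ (Nat.mul_le_mul_right _ hA)).trans ?_) _
    rw [mul_comm, pow_mul]
    exact pow_dvd_pow_of_dvd (by exact_mod_cast h) A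

theorem three_term_congruence_general (p : ℕ) (hp : p.Prime) (hp3 : 3 < p)
    (A B : ℕ) (hA : 3 ≤ A) (γ : ℕ → ℤ) (c : ℤ) (k : ℕ) (hk4 : k < 4)
    (hγ : γ p = 1 + c * (p : ℤ) ^ (k - 1)) (m r : ℕ) (hr : 3 ≤ r) :
    ((∑ j ∈ Finset.range (m * p ^ r + 1),
        (Nat.choose (m * p ^ r) j) ^ A * (Nat.choose (2 * j) j) ^ B : ℕ) : ℤ) -
      γ p * ((∑ j ∈ Finset.range (m * p ^ (r - 1) + 1),
        (Nat.choose (m * p ^ (r - 1)) j) ^ A * (Nat.choose (2 * j) j) ^ B : ℕ) : ℤ) +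
      c * (p : ℤ) ^ (k - 1) * ((∑ j ∈ Finset.range (m * p ^ (r - 2) + 1),
        (Nat.choose (m * p ^ (r - 2)) j) ^ A * (Nat.choose (2 * j) j) ^ B : ℕ) : ℤ) ≡
      0 [ZMOD (p : ℤ) ^ (3 * r + k - 4)] := by
  have hp5 : 5 ≤ p := by
    rcases (by omega : p = 4 ∨ 5 ≤ p) with rfl | h
    · norm_num at hp
    · exact h
  obtain ⟨s, rfl⟩ : ∃ s, r = s + 2 := ⟨r - 2, by omega⟩
  have hmul (t : ℕ) : m * p ^ (t + 1) = p * (m * p ^ t) := by ring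
  have h1 := pow_dvd_binomSum_mul_sub (B := B) hp hp5 hA (dvd_mul_left (p ^ (s + 1)) m)
  have h2 := pow_dvd_binomSum_mul_sub (B := B) hp hp5 hA (dvd_mul_left (p ^ s) m)
  rw [← hmul] at h1 h2
  change (binomSum A B (m * p ^ (s + 2)) : ℤ) - γ p * binomSum A B (m * p ^ (s + 1))
    + c * (p : ℤ) ^ (k - 1) * binomSum A B (m * p ^ s)
      ≡ 0 [ZMOD (p : ℤ) ^ (3 * (s + 2) + k - 4)]
  rw [Int.modEq_zero_iff_dvd, hγ, show ∀ x y z : ℤ,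
    x - (1 + c * p ^ (k - 1)) * y + c * p ^ (k - 1) * z = (x - y) - c * p ^ (k - 1) * (y - z) by
      intros; ring]
  refine dvd_sub ((pow_dvd_pow _ (by omega)).trans h1) ?_
  rw [mul_comm c, mul_assoc]
  have h3 := mul_dvd_mul_left ((p : ℤ) ^ (k - 1)) (h2.mul_left c)
  rw [← pow_add] at h3
  exact (pow_dvd_pow _ (by omega)).trans h3

theorem three_term_congruence (p : ℕ) (hp : p.Prime) (hp3 : 3 < p)
    (A B : ℕ) (hA : 3 ≤ A) (γ : ℕ → ℤ) (c : ℤ) (k : ℕ) (hk2 : 2 ≤ k) (hk4 : k < 4)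
    (hγ : γ p = 1 + c * (p : ℤ) ^ (k - 1)) (m r : ℕ) (hm : 1 ≤ m) (hr : 3 ≤ r) :
    ((∑ j ∈ Finset.range (m * p ^ r + 1),
        (Nat.choose (m * p ^ r) j) ^ A * (Nat.choose (2 * j) j) ^ B : ℕ) : ℤ) -
      γ p * ((∑ j ∈ Finset.range (m * p ^ (r - 1) + 1),
        (Nat.choose (m * p ^ (r - 1)) j) ^ A * (Nat.choose (2 * j) j) ^ B : ℕ) : ℤ) +
      c * (p : ℤ) ^ (k - 1) * ((∑ j ∈ Finset.range (m * p ^ (r - 2) + 1),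
        (Nat.choose (m * p ^ (r - 2)) j) ^ A * (Nat.choose (2 * j) j) ^ B : ℕ) : ℤ) ≡
      0 [ZMOD (p : ℤ) ^ (3 * r + k - 4)] :=
  three_term_congruence_general p hp hp3 A B hA γ c k hk4 hγ m r hr
end

section
/- For a prime p > 3 and any A ≥ 3, B ∈ ℕ, the congruence C(p, A, B) ≡ C(1, A, B) = 1 + 2^B (mod p^3) holds, where C(n, A, B) = Σ_{k=0}^{n} binom(n,k)^A · binom(2k,k)^B. -/
/-!
Each middle term `C(p,k)^A`, `0 < k < p`, is divisible by `p^A` and hence by `p^3`, so the sum is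
congruent to `1 + C(2p,p)^B`, and Wolstenholme's congruence `C(2p,p) ≡ 2 (mod p^3)` finishes.
For the latter, Vandermonde gives `C(2p,p) = Σ C(p,k)^2 = 2 + p^2 Σ_{0<k<p} (C(p,k)/p)^2`, and
`C(p,k)/p ≡ (-1)^(k-1)/k (mod p)`, so the last sum is `≡ Σ_{x ∈ 𝔽_p^×} x⁻² = 0 (mod p)` once `p > 3`.
-/

open Finset

theorem ZMod.sum_range_natCast {M : Type*} [AddCommMonoid M] (n : ℕ) [NeZero n]
    (f : ZMod n → M) : ∑ k ∈ range n, f k = ∑ x, f x :=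
  sum_nbij' (↑) ZMod.val (fun _ _ ↦ mem_univ _) (fun x _ ↦ mem_range.2 x.val_lt)
    (fun _ hk ↦ ZMod.val_natCast_of_lt (mem_range.1 hk)) (fun x _ ↦ ZMod.natCast_zmod_val x)
    (fun _ _ ↦ rfl)

theorem FiniteField.sum_inv_pow_lt_card_sub_one {K : Type*} [Field K] [Fintype K] {i : ℕ}
    (h : i < Fintype.card K - 1) : ∑ x : K, x⁻¹ ^ i = 0 := by
  rw [← sum_pow_lt_card_sub_one K i h]
  exact Fintype.sum_equiv (Equiv.inv K) _ _ fun _ ↦ rfl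

namespace Nat.Prime

variable {p : ℕ}

theorem cast_choose_pred_eq_neg_one_pow (hp : p.Prime) {k : ℕ} (hk : k < p) :
    ((p - 1).choose k : ZMod p) = (-1) ^ k := by
  induction k with
  | zero => simp
  | succ k ih =>
    have hpascal : p.choose (k + 1) = (p - 1).choose k + (p - 1).choose (k + 1) := by
      simpa [Nat.sub_add_cancel hp.one_le] using Nat.choose_succ_succ (p - 1) k
    have hzero : (p.choose (k + 1) : ZMod p) = 0 :=
      (ZMod.natCast_eq_zero_iff _ _).2 (hp.dvd_choose_self k.succ_ne_zero hk)
    rw [hpascal, Nat.cast_add, ih (by omega)] at hzero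
    rw [pow_succ]
    linear_combination hzero

theorem mul_choose_div_self (hp : p.Prime) {k : ℕ} (hk0 : 0 < k) (hkp : k < p) :
    k * (p.choose k / p) = (p - 1).choose (k - 1) := by
  have h := Nat.add_one_mul_choose_eq (p - 1) (k - 1)
  rw [Nat.sub_add_cancel hp.one_le, Nat.sub_add_cancel hk0] at h
  refine Nat.eq_of_mul_eq_mul_left hp.pos ?_
  rw [h, mul_left_comm, Nat.mul_div_cancel' (hp.dvd_choose_self hk0.ne' hkp), mul_comm]

theorem cast_choose_div_self_sq (hp : p.Prime) {k : ℕ} (hk0 : 0 < k) (hkp : k < p) :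
    ((p.choose k / p : ℕ) : ZMod p) ^ 2 = (k : ZMod p)⁻¹ ^ 2 := by
  have := Fact.mk hp
  have hk : (k : ZMod p) ≠ 0 := by
    rw [Ne, ZMod.natCast_eq_zero_iff]
    exact fun h ↦ (Nat.le_of_dvd hk0 h).not_gt hkp
  have hmul := congrArg (Nat.cast : ℕ → ZMod p) (hp.mul_choose_div_self hk0 hkp)
  rw [Nat.cast_mul, hp.cast_choose_pred_eq_neg_one_pow (by omega)] at hmul
  have hq : ((p.choose k / p : ℕ) : ZMod p) = (k : ZMod p)⁻¹ * (-1) ^ (k - 1) := by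
    rw [← hmul, inv_mul_cancel_left₀ hk]
  rw [hq, mul_pow, ← pow_mul, Even.neg_one_pow ⟨k - 1, by ring⟩, mul_one]

theorem dvd_sum_sq_choose_div_self (hp : p.Prime) (hp3 : 3 < p) :
    p ∣ ∑ k ∈ Ico 1 p, (p.choose k / p) ^ 2 := by
  have := Fact.mk hp
  rw [← ZMod.natCast_eq_zero_iff, Nat.cast_sum]
  calc ∑ k ∈ Ico 1 p, (((p.choose k / p) ^ 2 : ℕ) : ZMod p)
      = ∑ k ∈ range p, (k : ZMod p)⁻¹ ^ 2 := by
        rw [sum_range_eq_add_Ico _ hp.pos, Nat.cast_zero, inv_zero, zero_pow two_ne_zero, zero_add]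
        refine sum_congr rfl fun k hk ↦ ?_
        rw [mem_Ico] at hk
        rw [Nat.cast_pow, hp.cast_choose_div_self_sq hk.1 hk.2]
    _ = ∑ x : ZMod p, x⁻¹ ^ 2 := ZMod.sum_range_natCast p (·⁻¹ ^ 2)
    _ = 0 := FiniteField.sum_inv_pow_lt_card_sub_one (by rw [ZMod.card]; omega)

theorem choose_two_mul_self_modEq_two (hp : p.Prime) (hp3 : 3 < p) :
    (2 * p).choose p ≡ 2 [MOD p ^ 3] := by
  have hmid : ∑ k ∈ Ico 1 p, p.choose k ^ 2 = ∑ k ∈ Ico 1 p, p ^ 2 * (p.choose k / p) ^ 2 :=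
    sum_congr rfl fun k hk ↦ by
      rw [mem_Ico] at hk
      rw [← mul_pow, Nat.mul_div_cancel' (hp.dvd_choose_self (by omega) hk.2)]
  have hsplit : (2 * p).choose p = 2 + p ^ 2 * ∑ k ∈ Ico 1 p, (p.choose k / p) ^ 2 := by
    rw [← Nat.sum_range_choose_sq, sum_range_succ, sum_range_eq_add_Ico _ hp.pos, hmid, ← mul_sum,
      Nat.choose_zero_right, Nat.choose_self]
    ring
  obtain ⟨t, ht⟩ := hp.dvd_sum_sq_choose_div_self hp3
  rw [hsplit, ht, ← mul_assoc, ← pow_succ]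
  exact Nat.add_mul_mod_self_left 2 (p ^ 3) t

end Nat.Prime

theorem C_p_congruence_mod_p_cubed (p : ℕ) (hp : p.Prime) (hp3 : 3 < p)
    (A B : ℕ) (hA : 3 ≤ A) :
    (∑ k ∈ Finset.range (p + 1),
        (Nat.choose p k) ^ A * (Nat.choose (2 * k) k) ^ B) ≡ 1 + 2 ^ B [MOD p ^ 3] ∧
    (∑ k ∈ Finset.range 2,
        (Nat.choose 1 k) ^ A * (Nat.choose (2 * k) k) ^ B) = 1 + 2 ^ B := by
  refine ⟨?_, by simp [sum_range_succ]⟩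
  have hmid : ∑ k ∈ Ico 1 p, p.choose k ^ A * (2 * k).choose k ^ B ≡ 0 [MOD p ^ 3] := by
    refine Nat.modEq_zero_iff_dvd.2 (dvd_sum fun k hk ↦ Dvd.dvd.mul_right ?_ _)
    obtain ⟨hk0, hkp⟩ := mem_Ico.1 hk
    exact (pow_dvd_pow_of_dvd (hp.dvd_choose_self (by omega) hkp) 3).trans (pow_dvd_pow _ hA)
  rw [sum_range_succ, sum_range_eq_add_Ico _ hp.pos]
  simpa using ((Nat.ModEq.refl 1).add hmid).add ((hp.choose_two_mul_self_modEq_two hp3).pow B)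
end
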